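/- Let a, b ∈ ℝ with 0 < a < b, let n ∈ ℤ with |n(n−1)| ≥ 3, and let q > 1 and p > 1 with 1/p + 1/q = 1. Then |L_n^n(a,b) − A^n(a,b)| ≤ |n(n−1)| · ((b−a)²/(8·(2p+1)^{1/p})) · (sup{a^{q(n−2)}, b^{q(n−2)}})^{1/q}, i.e., |(b^{n+1} − a^{n+1})/((n+1)(b−a)) − ((a+b)/2)^n| ≤ |n(n−1)| · ((b−a)²/(8·(2p+1)^{1/p})) · (sup{a^{q(n−2)}, b^{q(n−2)}})^{1/q}. -/

import Mathlib

/-!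
The quantity `(b^(n+1) - a^(n+1)) / ((n+1)(b-a))` is the mean value of `f x = x^n` on `[a, b]`,
so its distance to `((a+b)/2)^n` is the error of the midpoint rule divided by `b - a`. That error
is at most `sup |f''| (b-a)^3 / 24`, by integrating the second-order Taylor bound around the
midpoint. As `t ↦ t^(n-2)` is monotone, `sup |f''| = |n(n-1)| max (a^(n-2), b^(n-2))`, and this
maximum is unchanged by taking `q`-th powers and then `q`-th roots. Finally Bernoulli's inequality
gives `(2p+1)^(1/p) ≤ 3`, so `1/24 ≤ 1 / (8 (2p+1)^(1/p))`.
-/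

open MeasureTheory intervalIntegral Set
open scoped Interval

theorem add_mul_sub_mem_uIcc {m x t : ℝ} (ht : t ∈ Icc 0 1) : m + t * (x - m) ∈ [[m, x]] := by
  rw [← segment_eq_uIcc]
  simpa [AffineMap.lineMap_apply, add_comm, smul_eq_mul] using lineMap_mem_segment ℝ m x ht

section Taylor

variable {f f' f'' : ℝ → ℝ} {m x : ℝ}

-- Parametrising `[[m, x]]` by `[0, 1]` keeps the kernel `1 - t` nonnegative whichever of `m`, `x`
-- is larger.
theorem sub_sub_mul_sub_eq_sq_mul_integral
    (hf : ∀ y ∈ [[m, x]], HasDerivAt f (f' y) y)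
    (hf' : ∀ y ∈ [[m, x]], HasDerivAt f' (f'' y) y)
    (hf'' : ContinuousOn f'' [[m, x]]) :
    f x - f m - f' m * (x - m) =
      (x - m) ^ 2 * ∫ t in (0 : ℝ)..1, (1 - t) * f'' (m + t * (x - m)) := by
  have hmaps : MapsTo (fun t : ℝ => m + t * (x - m)) [[0, 1]] [[m, x]] := fun t ht =>
    add_mul_sub_mem_uIcc (by rwa [uIcc_of_le zero_le_one] at ht)
  have hderiv : ∀ t ∈ [[(0 : ℝ), 1]], HasDerivAt
      (fun t => f (m + t * (x - m)) + (1 - t) * (x - m) * f' (m + t * (x - m)))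
      ((x - m) ^ 2 * ((1 - t) * f'' (m + t * (x - m)))) t := by
    intro t ht
    have hline : HasDerivAt (fun t : ℝ => m + t * (x - m)) (x - m) t := by
      simpa using ((hasDerivAt_id t).mul_const (x - m)).const_add m
    have h1 := (hf _ (hmaps ht)).comp t hline
    have h2 := (hf' _ (hmaps ht)).comp t hline
    exact (h1.add ((((hasDerivAt_id t).const_sub 1).mul_const (x - m)).mul h2)).congr_deriv
      (by simp only [id, Function.comp_apply]; ring)
  have hint : IntervalIntegrable (fun t => (1 - t) * f'' (m + t * (x - m))) volume 0 1 :=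
    (ContinuousOn.mul (by fun_prop) (hf''.comp (by fun_prop) hmaps)).intervalIntegrable
  rw [← intervalIntegral.integral_const_mul,
    integral_eq_sub_of_hasDerivAt hderiv (hint.const_mul _)]
  simp only [one_mul, add_sub_cancel, sub_self, zero_mul, add_zero, sub_zero]
  ring

theorem abs_sub_sub_mul_sub_le_of_abs_deriv2_le {K : ℝ}
    (hf : ∀ y ∈ [[m, x]], HasDerivAt f (f' y) y)
    (hf' : ∀ y ∈ [[m, x]], HasDerivAt f' (f'' y) y)
    (hf'' : ContinuousOn f'' [[m, x]]) (hK : ∀ y ∈ [[m, x]], |f'' y| ≤ K) :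
    |f x - f m - f' m * (x - m)| ≤ K * (x - m) ^ 2 / 2 := by
  have hbound : ‖∫ t in (0 : ℝ)..1, (1 - t) * f'' (m + t * (x - m))‖ ≤
      ∫ t in (0 : ℝ)..1, K * (1 - t) := by
    refine norm_integral_le_of_norm_le zero_le_one (ae_of_all _ fun t ht => ?_)
      ((by fun_prop : Continuous fun t : ℝ => K * (1 - t)).intervalIntegrable _ _)
    rw [norm_mul, Real.norm_eq_abs, abs_of_nonneg (by linarith [ht.2]), mul_comm]
    exact mul_le_mul_of_nonneg_right (hK _ (add_mul_sub_mem_uIcc (Ioc_subset_Icc_self ht)))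
      (by linarith [ht.2])
  have hkernel : ∫ t in (0 : ℝ)..1, K * (1 - t) = K / 2 := by
    rw [intervalIntegral.integral_const_mul, integral_comp_sub_left (fun t => t), sub_self,
      sub_zero, integral_id]
    ring
  rw [Real.norm_eq_abs, hkernel] at hbound
  rw [sub_sub_mul_sub_eq_sq_mul_integral hf hf' hf'', abs_mul, abs_of_nonneg (sq_nonneg _)]
  nlinarith [sq_nonneg (x - m)]

end Taylor

theorem abs_integral_sub_mul_midpoint_le {f f' f'' : ℝ → ℝ} {a b K : ℝ} (hab : a ≤ b)
    (hf : ∀ x ∈ Icc a b, HasDerivAt f (f' x) x)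
    (hf' : ∀ x ∈ Icc a b, HasDerivAt f' (f'' x) x)
    (hf'' : ContinuousOn f'' (Icc a b)) (hK : ∀ x ∈ Icc a b, |f'' x| ≤ K) :
    |(∫ x in a..b, f x) - (b - a) * f ((a + b) / 2)| ≤ K * (b - a) ^ 3 / 24 := by
  have hm : (a + b) / 2 ∈ Icc a b := ⟨by linarith, by linarith⟩
  set m := (a + b) / 2
  have hfint : IntervalIntegrable f volume a b :=
    (HasDerivAt.continuousOn hf).intervalIntegrable_of_Icc hab
  have hlin : ∫ x in a..b, (x - m) = 0 := by
    rw [integral_comp_sub_right (fun x => x), integral_id]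
    ring
  have hremainder : (∫ x in a..b, f x) - (b - a) * f m =
      ∫ x in a..b, (f x - f m - f' m * (x - m)) := by
    rw [integral_sub (hfint.sub intervalIntegrable_const)
      ((by fun_prop : Continuous fun x => f' m * (x - m)).intervalIntegrable _ _),
      integral_sub hfint intervalIntegrable_const, intervalIntegral.integral_const_mul, hlin]
    simp
  have hbound :
      ‖∫ x in a..b, (f x - f m - f' m * (x - m))‖ ≤ ∫ x in a..b, K * (x - m) ^ 2 / 2 := by
    refine norm_integral_le_of_norm_le hab (ae_of_all _ fun x hx => ?_)
      ((by fun_prop : Continuous fun x => K * (x - m) ^ 2 / 2).intervalIntegrable _ _)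
    have hsub : [[m, x]] ⊆ Icc a b := uIcc_subset_Icc hm (Ioc_subset_Icc_self hx)
    exact abs_sub_sub_mul_sub_le_of_abs_deriv2_le (fun y hy => hf y (hsub hy))
      (fun y hy => hf' y (hsub hy)) (hf''.mono hsub) (fun y hy => hK y (hsub hy))
  have hkernel : ∫ x in a..b, K * (x - m) ^ 2 / 2 = K * (b - a) ^ 3 / 24 := by
    simp only [mul_div_assoc, intervalIntegral.integral_const_mul, intervalIntegral.integral_div]
    rw [integral_comp_sub_right (fun x => x ^ 2), integral_pow]
    ring
  rwa [hremainder, ← hkernel]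

theorem rpow_le_max_rpow_of_mem_Icc {a b x : ℝ} (c : ℝ) (ha : 0 < a) (hx : x ∈ Icc a b) :
    x ^ c ≤ max (a ^ c) (b ^ c) := by
  rcases le_total 0 c with hc | hc
  · exact le_max_of_le_right (Real.rpow_le_rpow (ha.trans_le hx.1).le hx.2 hc)
  · exact le_max_of_le_left (Real.rpow_le_rpow_of_nonpos ha hx.1 hc)

theorem max_rpow_mul_rpow_one_div {x y q : ℝ} (c : ℝ) (hx : 0 ≤ x) (hy : 0 ≤ y)
    (hq : 0 < q) :
    max (x ^ (q * c)) (y ^ (q * c)) ^ (1 / q) = max (x ^ c) (y ^ c) := by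
  have hcancel : ∀ z : ℝ, 0 ≤ z → (z ^ (q * c)) ^ (1 / q) = z ^ c := fun z hz => by
    rw [← Real.rpow_mul hz]
    field_simp
  rw [Real.rpow_max (by positivity) (by positivity) (by positivity), hcancel x hx, hcancel y hy]

theorem two_mul_add_one_rpow_one_div_le_three {p : ℝ} (hp : 1 ≤ p) :
    (2 * p + 1) ^ (1 / p) ≤ 3 := by
  have hbernoulli : 1 + p * 2 ≤ (1 + 2) ^ p :=
    one_add_mul_self_le_rpow_one_add (by norm_num) hp
  calc (2 * p + 1) ^ (1 / p) ≤ ((1 + 2 : ℝ) ^ p) ^ (1 / p) := by gcongr; linarith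
    _ = 3 := by
      rw [← Real.rpow_mul (by norm_num), mul_one_div_cancel (by positivity), Real.rpow_one]
      norm_num

theorem abs_average_zpow_sub_midpoint_zpow_le {a b : ℝ} (ha : 0 < a) (hab : a < b) {n : ℤ}
    (hn : n ≠ -1) :
    |(b ^ (n + 1) - a ^ (n + 1)) / ((n + 1) * (b - a)) - ((a + b) / 2) ^ n| ≤
      |(n : ℝ) * (n - 1)| * max (a ^ ((n : ℝ) - 2)) (b ^ ((n : ℝ) - 2)) *
        (b - a) ^ 2 / 24 := by
  have hx0 : ∀ x ∈ Icc a b, x ≠ 0 := fun x hx => (ha.trans_le hx.1).ne'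
  have hf : ∀ x ∈ Icc a b, HasDerivAt (· ^ n) ((n : ℝ) * x ^ (n - 1)) x :=
    fun x hx => hasDerivAt_zpow n x (Or.inl (hx0 x hx))
  have hf' : ∀ x ∈ Icc a b, HasDerivAt (fun x : ℝ => (n : ℝ) * x ^ (n - 1))
      ((n : ℝ) * (n - 1) * x ^ (n - 2)) x := fun x hx => by
    refine ((hasDerivAt_zpow (n - 1) x (Or.inl (hx0 x hx))).const_mul (n : ℝ)).congr_deriv ?_
    rw [show n - 1 - 1 = n - 2 by ring]
    push_cast
    ring
  have hf'' : ContinuousOn (fun x : ℝ => (n : ℝ) * (n - 1) * x ^ (n - 2)) (Icc a b) :=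
    continuousOn_const.mul fun x hx =>
      (continuousAt_zpow₀ x _ (Or.inl (hx0 x hx))).continuousWithinAt
  have hK : ∀ x ∈ Icc a b, |(n : ℝ) * (n - 1) * x ^ (n - 2)| ≤
      |(n : ℝ) * (n - 1)| * max (a ^ ((n : ℝ) - 2)) (b ^ ((n : ℝ) - 2)) := fun x hx => by
    rw [abs_mul, abs_of_pos (zpow_pos (ha.trans_le hx.1) _)]
    gcongr
    exact_mod_cast rpow_le_max_rpow_of_mem_Icc ((n - 2 : ℤ) : ℝ) ha hx
  have hmidpoint := abs_integral_sub_mul_midpoint_le hab.le hf hf' hf'' hK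
  have hzero : (0 : ℝ) ∉ [[a, b]] := by
    rw [uIcc_of_le hab.le]
    exact fun h => h.1.not_gt ha
  rw [integral_zpow (Or.inr ⟨hn, hzero⟩)] at hmidpoint
  have hn1 : (n : ℝ) + 1 ≠ 0 := by exact_mod_cast (by omega : n + 1 ≠ 0)
  have hba : 0 < b - a := sub_pos.mpr hab
  rw [show (b ^ (n + 1) - a ^ (n + 1)) / ((n + 1) * (b - a)) - ((a + b) / 2) ^ n =
      ((b ^ (n + 1) - a ^ (n + 1)) / (n + 1) - (b - a) * ((a + b) / 2) ^ n) / (b - a) by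
    field_simp, abs_div, abs_of_pos hba, div_le_iff₀ hba]
  exact hmidpoint.trans_eq (by ring)

theorem p_logarithmic_mean_arithmetic_mean_quasiconvex_holder_estimate_general
    (a b : ℝ) (ha : 0 < a) (hab : a < b) (n : ℤ) (hn : 3 ≤ |n * (n - 1)|)
    (p q : ℝ) (hp : 1 < p) (hq : 1 < q) :
    |(b ^ (n + 1) - a ^ (n + 1)) / ((n + 1) * (b - a)) - ((a + b) / 2) ^ n| ≤
      (|n * (n - 1)| : ℤ) * ((b - a) ^ 2 / (8 * (2 * p + 1) ^ (1 / p))) *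
        (max (a ^ (q * ((n : ℝ) - 2))) (b ^ (q * ((n : ℝ) - 2)))) ^ (1 / q) := by
  have hn_ne : n ≠ -1 := by
    rintro rfl
    norm_num at hn
  have hconst : (b - a) ^ 2 / 24 ≤ (b - a) ^ 2 / (8 * (2 * p + 1) ^ (1 / p)) := by
    have hthree := two_mul_add_one_rpow_one_div_le_three hp.le
    gcongr
    linarith
  rw [max_rpow_mul_rpow_one_div _ ha.le (ha.trans hab).le (by linarith)]
  push_cast
  calc _ ≤ |(n : ℝ) * (n - 1)| * max (a ^ ((n : ℝ) - 2)) (b ^ ((n : ℝ) - 2)) *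
        (b - a) ^ 2 / 24 := abs_average_zpow_sub_midpoint_zpow_le ha hab hn_ne
    _ ≤ _ := by
        rw [mul_div_assoc, mul_right_comm]
        gcongr

theorem p_logarithmic_mean_arithmetic_mean_quasiconvex_holder_estimate
    (a b : ℝ) (ha : 0 < a) (hab : a < b) (n : ℤ) (hn : 3 ≤ |n * (n - 1)|)
    (p q : ℝ) (hp : 1 < p) (hq : 1 < q) (hpq : 1 / p + 1 / q = 1) :
    |(b ^ (n + 1) - a ^ (n + 1)) / ((n + 1) * (b - a)) - ((a + b) / 2) ^ n| ≤
      (|n * (n - 1)| : ℤ) * ((b - a) ^ 2 / (8 * (2 * p + 1) ^ (1 / p))) *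
        (max (a ^ (q * ((n : ℝ) - 2))) (b ^ (q * ((n : ℝ) - 2)))) ^ (1 / q) :=
  p_logarithmic_mean_arithmetic_mean_quasiconvex_holder_estimate_general a b ha hab n hn p q hp hq
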